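/- arXiv:2309.11990 — 2 statements merged into one kernel-verified Lean document; each statement's English description precedes it below -/
import Mathlib

section
/- For an arbitrary subset A of ℝ, if B = ℝ \ A is countable and B is a G_δ-subset of ℝ with the Euclidean topology, then H(A) is σ-compact. -/
open Set TopologicalSpace Topology

/-- The Hattori topology τ(A) on ℝ: generated by the Euclidean open sets together with
all sets [x, x+ε) with x ∈ ℝ \ A and ε > 0. -/
def hattori (A : Set ℝ) : TopologicalSpace ℝ :=
  TopologicalSpace.generateFrom
    ({s : Set ℝ | IsOpen s} ∪ {s : Set ℝ | ∃ x ∉ A, ∃ ε > 0, s = Set.Ico x (x + ε)})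

lemma hattori_le (A : Set ℝ) : hattori A ≤ (inferInstance : TopologicalSpace ℝ) := by
  intro s hs
  exact TopologicalSpace.GenerateOpen.basic s (Or.inl hs)

lemma nhds_hattori_of_mem {A : Set ℝ} {x : ℝ} (hx : x ∈ A) :
    @nhds ℝ (hattori A) x = nhds x := by
  refine le_antisymm (nhds_mono (hattori_le A)) ?_
  rw [hattori, TopologicalSpace.nhds_generateFrom]
  refine le_iInf fun s => le_iInf fun hs => ?_
  obtain ⟨hxs, hgen⟩ := hs
  rcases hgen with h | ⟨y, hy, ε, hε, rfl⟩
  · exact Filter.le_principal_iff.2 (IsOpen.mem_nhds h hxs)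
  · have hxy : x ≠ y := fun h => hy (h ▸ hx)
    have : x ∈ Set.Ioo y (y + ε) := ⟨lt_of_le_of_ne hxs.1 (Ne.symm hxy), hxs.2⟩
    exact Filter.le_principal_iff.2 (Filter.mem_of_superset (Ioo_mem_nhds this.1 this.2) Ioo_subset_Ico_self)

lemma isCompact_hattori {A K : Set ℝ} (hK : IsCompact K) (hKA : K ⊆ A) :
    @IsCompact ℝ (hattori A) K := by
  intro f hne hf
  obtain ⟨x, hxK, hx⟩ := hK hf
  refine ⟨x, hxK, ?_⟩
  have : @nhds ℝ (hattori A) x = nhds x := nhds_hattori_of_mem (hKA hxK)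
  have hx' : Filter.NeBot (nhds x ⊓ f) := hx
  show Filter.NeBot (@nhds ℝ (hattori A) x ⊓ f)
  rw [this]
  exact hx'

/-- If B = ℝ \ A is countable and a G_δ-subset of the Euclidean real line,
then H(A) is σ-compact. -/
theorem sigmaCompact_of_countable_Gdelta_compl (A B : Set ℝ) (hB : B = Aᶜ)
    (hcount : B.Countable) (hGdelta : IsGδ B) :
    @SigmaCompactSpace ℝ (hattori A) := by
  obtain ⟨u, hu_open, hu⟩ := hGdelta.eq_iInter_nat
  -- enumerate B (possibly empty) via insert
  have hBne : (insert (0:ℝ) B).Nonempty := insert_nonempty _ _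
  obtain ⟨g, hg⟩ := (hcount.insert 0).exists_eq_range hBne
  have hBg : B ⊆ Set.range g := by rw [← hg]; exact subset_insert _ _
  -- the compact pieces
  set K : (ℕ × ℕ) ⊕ ℕ → Set ℝ := fun i =>
    match i with
    | Sum.inl (n, m) => (u n)ᶜ ∩ Set.Icc (-(m:ℝ)) m
    | Sum.inr n => {g n}
  have hKcomp : ∀ i, @IsCompact ℝ (hattori A) (K i) := by
    rintro (⟨n, m⟩ | n)
    · refine isCompact_hattori (IsCompact.inter_left isCompact_Icc (hu_open n).isClosed_compl) ?_
      intro x hx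
      by_contra hxA
      have hxB : x ∈ B := hB ▸ hxA
      rw [hu] at hxB
      exact hx.1 (Set.mem_iInter.1 hxB n)
    · exact @isCompact_singleton ℝ (hattori A) _
  have hcover : ⋃ i, K i = Set.univ := by
    refine Set.eq_univ_of_forall fun x => ?_
    by_cases hx : x ∈ B
    · obtain ⟨n, hn⟩ := hBg hx
      exact Set.mem_iUnion.2 ⟨Sum.inr n, hn.symm⟩
    · have hxA : x ∉ ⋂ n, u n := by rwa [← hu]
      obtain ⟨n, hn⟩ := by simpa using hxA
      obtain ⟨m, hm⟩ := exists_nat_ge |x|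
      refine Set.mem_iUnion.2 ⟨Sum.inl (n, m), hn, ?_⟩
      constructor
      · linarith [neg_abs_le x]
      · linarith [le_abs_self x]
  refine @SigmaCompactSpace.mk ℝ (hattori A) ?_
  rw [← hcover]
  exact @isSigmaCompact_iUnion_of_isCompact ℝ _ (hattori A) _ K hKcomp
end

section
/- The set B₁ is nowhere dense in the space H(A₁), and B₁ with the subspace topology inherited from H(A₁) is homeomorphic to the space ℚ of rational numbers with its usual (Euclidean) topology. -/
/-
Points of `B₁` lie outside `A₁`, so in `H(A₁)` they have the Sorgenfrey neighbourhoods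
`[x, x + ε)`. The Hattori topology is finer than the Euclidean one and every Hattori-open set
contains a Euclidean interval, so `B₁` is nowhere dense in `H(A₁)` because the Cantor set, which
contains it, is nowhere dense (being totally disconnected) in `ℝ`.

Code `B₁` by lists of natural numbers, the list recording the runs of zeros between the ternary
digits `2`. The right neighbourhoods of a point of `B₁` are then exactly the extensions of its code
whose next entry is large. A second coding into `ℝ`, in which the children of a node accumulate at
it from both sides, has the same neighbourhood filters for the Euclidean topology, so `B₁` is
homeomorphic to its image. That image is a countable order, dense and without endpoints, whose
subspace topology is its order topology; by Cantor's back-and-forth theorem it is homeomorphic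
to `ℚ`.
-/

open Set TopologicalSpace Topology

/-- `B₁`: the set of left endpoints of the closed intervals appearing in the standard
middle-thirds construction of the Cantor set. -/
def B1 : Set ℝ :=
  {x | ∃ n : ℕ, ∃ c : ℕ → ℝ, (∀ i, c i = 0 ∨ c i = 2) ∧
    x = ∑ i ∈ Finset.range n, c i / 3 ^ (i + 1)}

/-- `A₁ = ℝ \ B₁`. -/
def A1 : Set ℝ := B1ᶜ

open Filter Function

theorem isOpen_hattori_of_isOpen {A s : Set ℝ} (hs : IsOpen s) : IsOpen[hattori A] s :=
  isOpen_generateFrom_of_mem (Or.inl hs)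

theorem isOpen_hattori_Ico {A : Set ℝ} {x u : ℝ} (hx : x ∉ A) (hxu : x < u) :
    IsOpen[hattori A] (Ico x u) :=
  isOpen_generateFrom_of_mem (Or.inr ⟨x, hx, u - x, sub_pos.2 hxu, by rw [add_sub_cancel]⟩)

theorem nhdsGE_le_nhds_hattori (A : Set ℝ) (x : ℝ) : 𝓝[≥] x ≤ @nhds ℝ (hattori A) x := by
  rw [hattori, nhds_generateFrom]
  refine le_iInf₂ fun s ⟨hxs, hs⟩ => le_principal_iff.2 ?_
  rcases hs with hs | ⟨y, -, ε, -, rfl⟩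
  · exact mem_nhdsWithin_of_mem_nhds ((show IsOpen s from hs).mem_nhds hxs)
  · exact Ico_mem_nhdsGE_of_mem hxs

theorem nhds_hattori_of_notMem {A : Set ℝ} {x : ℝ} (hx : x ∉ A) :
    @nhds ℝ (hattori A) x = 𝓝[≥] x := by
  refine le_antisymm ((nhdsGE_basis_Ico x).ge_iff.2 fun u hu => ?_) (nhdsGE_le_nhds_hattori A x)
  exact @IsOpen.mem_nhds ℝ (hattori A) _ _ (isOpen_hattori_Ico hx hu) ⟨le_rfl, hu⟩

theorem isNowhereDense_hattori {s : Set ℝ} (hs : IsNowhereDense s) (A : Set ℝ) :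
    @IsNowhereDense ℝ (hattori A) s := by
  have hclosed : IsClosed[hattori A] (closure s) :=
    (@isOpen_compl_iff ℝ _ (hattori A)).1
      (isOpen_hattori_of_isOpen isClosed_closure.isOpen_compl)
  have hcl : closure[hattori A] s ⊆ closure s :=
    @closure_minimal ℝ (hattori A) _ _ subset_closure hclosed
  refine eq_empty_of_forall_notMem fun x hx => ?_
  obtain ⟨u, hxu, hsub⟩ := mem_nhdsGE_iff_exists_Ico_subset.1 <| nhdsGE_le_nhds_hattori A x <|
    @IsOpen.mem_nhds ℝ (hattori A) _ _ (@isOpen_interior ℝ (hattori A) _) hx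
  have hIoo : Ioo x u ⊆ interior (closure s) := interior_maximal
    (Ioo_subset_Ico_self.trans (hsub.trans ((@interior_subset ℝ (hattori A) _).trans hcl)))
    isOpen_Ioo
  rw [hs] at hIoo
  exact hIoo (exists_between hxu).choose_spec

theorem isNowhereDense_cantorSet : IsNowhereDense cantorSet := by
  have hdisc : IsTotallyDisconnected cantorSet :=
    totallyDisconnectedSpace_subtype_iff.1
      cantorSetHomeomorphNatToBool.symm.totallyDisconnectedSpace
  refine isClosed_cantorSet.isNowhereDense_iff.2 (eq_empty_of_forall_notMem fun x hx => ?_)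
  obtain ⟨u, hxu, hsub⟩ := mem_nhdsGE_iff_exists_Ico_subset.1 <|
    mem_nhdsWithin_of_mem_nhds (mem_interior_iff_mem_nhds.1 hx)
  obtain ⟨y, hxy, hyu⟩ := exists_between (show x < u from hxu)
  obtain ⟨z, hz, hxz, hzy⟩ := isTotallyDisconnected_iff_lt.1 hdisc x (hsub ⟨le_rfl, hxu⟩) y
    (hsub ⟨hxy.le, hyu⟩) hxy
  exact hz (hsub ⟨hxz.le, hzy.trans hyu⟩)

def affineCode (a b : ℕ → ℝ) : List ℕ → ℝ
  | [] => 0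
  | k :: t => a k + b k * affineCode a b t

theorem affineCode_append (a b : ℕ → ℝ) (s t : List ℕ) :
    affineCode a b (s ++ t) = affineCode a b s + (s.map b).prod * affineCode a b t := by
  induction s with
  | nil => simp [affineCode]
  | cons k s ih =>
    simp only [List.cons_append, affineCode, ih, List.map_cons, List.prod_cons]
    ring

def cylinder (s : List ℕ) (K : ℕ) : Set (List ℕ) :=
  {w | ∃ t, w = s ++ t ∧ ∀ k ∈ t.head?, K ≤ k}

theorem cons_mem_cylinder_cons {s w : List ℕ} {K : ℕ} (a : ℕ) (h : w ∈ cylinder s K) :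
    a :: w ∈ cylinder (a :: s) K := by
  obtain ⟨t, rfl, ht⟩ := h
  exact ⟨t, rfl, ht⟩

theorem prefix_of_mem_cylinder {s w : List ℕ} {K : ℕ} (h : w ∈ cylinder s K) : s <+: w := by
  obtain ⟨t, rfl, -⟩ := h
  exact List.prefix_append s t

theorem injective_of_forall_mem_cylinder {X : Type*} {f : List ℕ → X}
    (h : ∀ s w, f w = f s → w ∈ cylinder s 0) : Injective f := fun s w heq => by
  have hsw := prefix_of_mem_cylinder (h s w heq.symm)
  have hws := prefix_of_mem_cylinder (h w s heq)
  exact hsw.eq_of_length (hsw.length_le.antisymm hws.length_le)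

/-- `cantorCode [k₁, …, kₙ]` has ternary digits `0^{k₁} 2 0^{k₂} 2 ⋯ 0^{kₙ} 2`. -/
noncomputable def cantorCode : List ℕ → ℝ :=
  affineCode (fun k => 2 * (1 / 3) ^ (k + 1)) (fun k => (1 / 3) ^ (k + 1))

/-- The length of the Cantor interval whose left endpoint is `cantorCode s`. -/
noncomputable def cantorWeight (s : List ℕ) : ℝ := (s.map fun k => (1 / 3 : ℝ) ^ (k + 1)).prod

theorem cantorCode_nil : cantorCode [] = 0 := rfl

theorem cantorCode_cons (k : ℕ) (t : List ℕ) :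
    cantorCode (k :: t) = (1 / 3) ^ (k + 1) * (2 + cantorCode t) := by
  simp only [cantorCode, affineCode]; ring

theorem cantorWeight_cons (k : ℕ) (t : List ℕ) :
    cantorWeight (k :: t) = (1 / 3) ^ (k + 1) * cantorWeight t := by
  simp [cantorWeight]

theorem cantorCode_append (s t : List ℕ) :
    cantorCode (s ++ t) = cantorCode s + cantorWeight s * cantorCode t :=
  affineCode_append _ _ s t

theorem cantorWeight_pos (s : List ℕ) : 0 < cantorWeight s :=
  List.prod_pos fun _ hx => by obtain ⟨k, -, rfl⟩ := List.mem_map.1 hx; positivity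

theorem cantorCode_nonneg (s : List ℕ) : 0 ≤ cantorCode s := by
  induction s with
  | nil => exact le_rfl
  | cons k t ih => rw [cantorCode_cons]; positivity

theorem cantorCode_add_cantorWeight_le_one (s : List ℕ) : cantorCode s + cantorWeight s ≤ 1 := by
  induction s with
  | nil => simp [cantorCode_nil, cantorWeight]
  | cons k t ih =>
    have hq : (1 / 3 : ℝ) ^ (k + 1) ≤ 1 / 3 :=
      pow_le_of_le_one (by norm_num) (by norm_num) (by omega)
    rw [cantorCode_cons, cantorWeight_cons]
    nlinarith [cantorCode_nonneg t, cantorWeight_pos t]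

theorem cantorCode_lt_one (s : List ℕ) : cantorCode s < 1 := by
  linarith [cantorCode_add_cantorWeight_le_one s, cantorWeight_pos s]

theorem cantorCode_cons_mem_Ico (k : ℕ) (t : List ℕ) :
    cantorCode (k :: t) ∈ Ico (2 * (1 / 3) ^ (k + 1)) (3 * (1 / 3) ^ (k + 1)) := by
  have hq : (0 : ℝ) < (1 / 3) ^ (k + 1) := by positivity
  rw [cantorCode_cons]
  constructor <;> nlinarith [cantorCode_nonneg t, cantorCode_lt_one t]

theorem cantorCode_cons_mem_Ico_iff {a b : ℕ} {w : List ℕ} :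
    cantorCode (b :: w) ∈ Ico (2 * (1 / 3) ^ (a + 1)) (3 * (1 / 3) ^ (a + 1)) ↔ a = b := by
  refine ⟨fun ha => ?_, fun hab => hab ▸ cantorCode_cons_mem_Ico b w⟩
  have hb := cantorCode_cons_mem_Ico b w
  have key : ∀ {m n : ℕ}, m < n → 3 * (1 / 3 : ℝ) ^ (n + 1) ≤ (1 / 3) ^ (m + 1) := fun h =>
    (pow_le_pow_of_le_one (by norm_num) (by norm_num) (show _ + 1 ≤ _ from h)).trans_eq' (by ring)
  have hpos : ∀ n : ℕ, (0 : ℝ) < (1 / 3) ^ (n + 1) := fun n => by positivity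
  rcases lt_trichotomy a b with h | h | h
  · nlinarith [key h, ha.1, hb.2, hpos a]
  · exact h
  · nlinarith [key h, hb.1, ha.2, hpos b]

theorem cantorCode_lt_of_head_ge {t : List ℕ} {K : ℕ} (ht : ∀ k ∈ t.head?, K ≤ k) :
    cantorCode t < (1 / 3) ^ K := by
  cases t with
  | nil => rw [cantorCode_nil]; positivity
  | cons k t =>
    calc cantorCode (k :: t) < 3 * (1 / 3) ^ (k + 1) := (cantorCode_cons_mem_Ico k t).2
      _ = (1 / 3) ^ k := by ring
      _ ≤ (1 / 3) ^ K := pow_le_pow_of_le_one (by norm_num) (by norm_num) (ht k rfl)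

theorem mem_cylinder_of_cantorCode_mem_Ico {K : ℕ} : ∀ {s w : List ℕ},
    cantorCode w ∈ Ico (cantorCode s) (cantorCode s + cantorWeight s * (1 / 3) ^ K) →
      w ∈ cylinder s K
  | [], [], _ => ⟨[], rfl, by simp⟩
  | [], k :: t, h => by
    refine ⟨k :: t, rfl, fun k' hk' => ?_⟩
    obtain rfl : k = k' := Option.some_injective _ hk'
    by_contra! hk
    have hKk : (1 / 3 : ℝ) ^ K ≤ (1 / 3) ^ (k + 1) :=
      pow_le_pow_of_le_one (by norm_num) (by norm_num) hk
    have hlt : cantorCode (k :: t) < (1 / 3) ^ K := by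
      simpa [cantorCode_nil, cantorWeight] using h.2
    nlinarith [(cantorCode_cons_mem_Ico k t).1, pow_pos (show (0 : ℝ) < 1 / 3 by norm_num) (k + 1)]
  | a :: s, [], h => absurd h.1 <| not_le.2 <|
      (by positivity : (0 : ℝ) < 2 * (1 / 3) ^ (a + 1)).trans_le (cantorCode_cons_mem_Ico a s).1
  | a :: s, b :: w, h => by
    have hq : (0 : ℝ) < (1 / 3) ^ (a + 1) := by positivity
    have hK : (1 / 3 : ℝ) ^ K ≤ 1 := pow_le_one₀ (by norm_num) (by norm_num)
    have hend : cantorCode (a :: s) + cantorWeight (a :: s) ≤ 3 * (1 / 3) ^ (a + 1) := by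
      rw [cantorCode_cons, cantorWeight_cons]
      nlinarith [cantorCode_add_cantorWeight_le_one s]
    have hab : cantorCode (b :: w) ∈ Ico (2 * (1 / 3) ^ (a + 1)) (3 * (1 / 3) ^ (a + 1)) :=
      ⟨(cantorCode_cons_mem_Ico a s).1.trans h.1, by nlinarith [h.2, cantorWeight_pos (a :: s)]⟩
    obtain rfl := cantorCode_cons_mem_Ico_iff.1 hab
    refine cons_mem_cylinder_cons a (mem_cylinder_of_cantorCode_mem_Ico ?_)
    rw [cantorCode_cons, cantorCode_cons, cantorWeight_cons] at h
    exact ⟨by nlinarith [h.1], by nlinarith [h.2]⟩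

theorem cantorCode_preimage_Ico (s : List ℕ) (K : ℕ) :
    cantorCode ⁻¹' Ico (cantorCode s) (cantorCode s + cantorWeight s * (1 / 3) ^ K) =
      cylinder s K := by
  ext w
  refine ⟨mem_cylinder_of_cantorCode_mem_Ico, ?_⟩
  rintro ⟨t, rfl, ht⟩
  rw [mem_preimage, cantorCode_append]
  have hW := cantorWeight_pos s
  exact ⟨by nlinarith [cantorCode_nonneg t], by nlinarith [cantorCode_lt_of_head_ge ht]⟩

theorem cantorCode_zero_cons (t : List ℕ) : cantorCode (0 :: t) = (2 + cantorCode t) / 3 := by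
  rw [cantorCode_cons]; ring

theorem cantorCode_succ_cons (k : ℕ) (t : List ℕ) :
    cantorCode ((k + 1) :: t) = cantorCode (k :: t) / 3 := by
  rw [cantorCode_cons, cantorCode_cons]; ring

theorem cantorCode_mem_preCantorSet : ∀ (n : ℕ) (s : List ℕ), cantorCode s ∈ preCantorSet n
  | 0, s => ⟨cantorCode_nonneg s, (cantorCode_lt_one s).le⟩
  | _ + 1, [] => zero_mem_preCantorSet _
  | n + 1, 0 :: t =>
    Or.inr ⟨_, cantorCode_mem_preCantorSet n t, (cantorCode_zero_cons t).symm⟩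
  | n + 1, (k + 1) :: t =>
    Or.inl ⟨_, cantorCode_mem_preCantorSet n (k :: t), (cantorCode_succ_cons k t).symm⟩

theorem sum_range_succ_div_three (c : ℕ → ℝ) (n : ℕ) :
    ∑ i ∈ Finset.range (n + 1), c i / 3 ^ (i + 1) =
      (c 0 + ∑ i ∈ Finset.range n, c (i + 1) / 3 ^ (i + 1)) / 3 := by
  rw [Finset.sum_range_succ', add_comm, add_div, Finset.sum_div]
  congr 1
  · simp
  · refine Finset.sum_congr rfl fun i _ => ?_
    rw [pow_succ]; ring

theorem add_div_three_mem_B1 {d x : ℝ} (hd : d = 0 ∨ d = 2) (hx : x ∈ B1) : (d + x) / 3 ∈ B1 := by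
  obtain ⟨n, c, hc, rfl⟩ := hx
  refine ⟨n + 1, fun i => Nat.casesOn i d c, fun i => ?_, ?_⟩
  · cases i
    exacts [hd, hc _]
  · exact (sum_range_succ_div_three (fun i => Nat.casesOn i d c) n).symm

theorem range_cantorCode : range cantorCode = B1 := by
  refine (range_subset_iff.2 fun s => ?_).antisymm fun x hx => ?_
  · induction s with
    | nil => exact ⟨0, 0, fun _ => Or.inl rfl, by simp [cantorCode_nil]⟩
    | cons k t ih =>
      induction k with
      | zero => rw [cantorCode_zero_cons]; exact add_div_three_mem_B1 (Or.inr rfl) ih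
      | succ k ihk =>
        rw [cantorCode_succ_cons, ← zero_add (cantorCode _)]
        exact add_div_three_mem_B1 (Or.inl rfl) ihk
  · obtain ⟨n, c, hc, rfl⟩ := hx
    induction n generalizing c with
    | zero => exact ⟨[], by simp [cantorCode_nil]⟩
    | succ n ih =>
      obtain ⟨w, hw⟩ := ih (fun i => c (i + 1)) fun i => hc (i + 1)
      rw [sum_range_succ_div_three, ← hw]
      rcases hc 0 with h | h <;> rw [h]
      · cases w with
        | nil => exact ⟨[], by simp [cantorCode_nil]⟩
        | cons k t => exact ⟨(k + 1) :: t, by rw [cantorCode_succ_cons, zero_add]⟩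
      · exact ⟨0 :: w, cantorCode_zero_cons w⟩

theorem isNowhereDense_B1 : IsNowhereDense B1 := by
  refine isNowhereDense_cantorSet.mono ?_
  rw [← range_cantorCode]
  rintro _ ⟨s, rfl⟩
  exact mem_iInter.2 fun n => cantorCode_mem_preCantorSet n s

theorem cantorCode_injective : Injective cantorCode :=
  injective_of_forall_mem_cylinder fun s w h => by
    rw [← cantorCode_preimage_Ico s 0, mem_preimage, h, pow_zero, mul_one]
    exact ⟨le_rfl, lt_add_of_pos_right _ (cantorWeight_pos s)⟩

theorem hasBasis_comap_cantorCode_nhdsGE (s : List ℕ) :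
    (comap cantorCode (𝓝[≥] (cantorCode s))).HasBasis (fun _ => True) (cylinder s) := by
  refine ((nhdsGE_basis_Ico _).comap cantorCode).to_hasBasis (fun u hu => ?_) fun K _ =>
    ⟨_, lt_add_of_pos_right _ (by have := cantorWeight_pos s; positivity),
      (cantorCode_preimage_Ico s K).le⟩
  obtain ⟨K, hK⟩ := exists_pow_lt_of_lt_one
    (div_pos (sub_pos.2 (show cantorCode s < u from hu)) (cantorWeight_pos s))
    (by norm_num : (1 / 3 : ℝ) < 1)
  refine ⟨K, trivial, ?_⟩
  rw [← cantorCode_preimage_Ico]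
  refine preimage_mono (Ico_subset_Ico_right ?_)
  rw [lt_div_iff₀ (cantorWeight_pos s)] at hK
  linarith

/-- `zigzagCode (k :: t)` lies within `(1/2)^k / 8` of `(-1/2)^k / 2`, so the children of a
node accumulate at it from the right (even `k`) and from the left (odd `k`). -/
noncomputable def zigzagCode : List ℕ → ℝ :=
  affineCode (fun k => (-1 / 2) ^ k / 2) (fun k => (1 / 2) ^ k / 8)

noncomputable def zigzagWeight (s : List ℕ) : ℝ := (s.map fun k => (1 / 2 : ℝ) ^ k / 8).prod

theorem zigzagCode_nil : zigzagCode [] = 0 := rfl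

theorem zigzagCode_cons (k : ℕ) (t : List ℕ) :
    zigzagCode (k :: t) = (-1 / 2) ^ k / 2 + (1 / 2) ^ k / 8 * zigzagCode t := rfl

theorem zigzagCode_append (s t : List ℕ) :
    zigzagCode (s ++ t) = zigzagCode s + zigzagWeight s * zigzagCode t :=
  affineCode_append _ _ s t

theorem zigzagWeight_pos (s : List ℕ) : 0 < zigzagWeight s :=
  List.prod_pos fun _ hx => by obtain ⟨k, -, rfl⟩ := List.mem_map.1 hx; positivity

theorem abs_zigzagCode_le_one (s : List ℕ) : |zigzagCode s| ≤ 1 := by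
  induction s with
  | nil => simp [zigzagCode_nil]
  | cons k t ih =>
    have hk : (1 / 2 : ℝ) ^ k ≤ 1 := pow_le_one₀ (by norm_num) (by norm_num)
    rw [zigzagCode_cons]
    calc _ ≤ |(-1 / 2 : ℝ) ^ k / 2| + |(1 / 2) ^ k / 8 * zigzagCode t| := abs_add_le _ _
      _ ≤ (1 / 2) ^ k / 2 + (1 / 2) ^ k / 8 * 1 := by
        rw [abs_div, abs_pow, abs_mul, abs_of_pos (by positivity : (0 : ℝ) < (1 / 2) ^ k / 8)]
        norm_num
        gcongr
      _ ≤ 1 := by linarith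

theorem abs_zigzagCode_cons_mem_Icc (k : ℕ) (t : List ℕ) :
    |zigzagCode (k :: t)| ∈ Icc (3 / 8 * (1 / 2) ^ k) (5 / 8 * (1 / 2) ^ k) := by
  have hhead : |(-1 / 2 : ℝ) ^ k / 2| = (1 / 2) ^ k / 2 := by
    rw [abs_div, abs_pow]; norm_num
  have htail : |(1 / 2 : ℝ) ^ k / 8 * zigzagCode t| ≤ (1 / 2) ^ k / 8 := by
    rw [abs_mul, abs_of_pos (by positivity : (0 : ℝ) < (1 / 2) ^ k / 8)]
    exact mul_le_of_le_one_right (by positivity) (abs_zigzagCode_le_one t)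
  rw [zigzagCode_cons]
  constructor
  · have := abs_sub_abs_le_abs_sub ((-1 / 2 : ℝ) ^ k / 2) (-((1 / 2) ^ k / 8 * zigzagCode t))
    rw [abs_neg, sub_neg_eq_add] at this
    linarith
  · linarith [abs_add_le ((-1 / 2 : ℝ) ^ k / 2) ((1 / 2) ^ k / 8 * zigzagCode t)]

theorem abs_zigzagCode_cons_sub_cons {a b : ℕ} (hab : a ≠ b) (t u : List ℕ) :
    (1 / 2) ^ a / 16 ≤ |zigzagCode (a :: t) - zigzagCode (b :: u)| := by
  obtain ⟨hta, hTa⟩ := abs_zigzagCode_cons_mem_Icc a t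
  obtain ⟨hub, hUb⟩ := abs_zigzagCode_cons_mem_Icc b u
  have hsub := abs_sub_abs_le_abs_sub (zigzagCode (a :: t)) (zigzagCode (b :: u))
  have hsub' := abs_sub_abs_le_abs_sub (zigzagCode (b :: u)) (zigzagCode (a :: t))
  rw [abs_sub_comm] at hsub'
  have key : ∀ {m n : ℕ}, m < n → (1 / 2 : ℝ) ^ n ≤ (1 / 2) ^ m / 2 := fun h =>
    (pow_le_pow_of_le_one (by norm_num) (by norm_num) (show _ + 1 ≤ _ from h)).trans_eq
      (by ring)
  have ha : (0 : ℝ) < (1 / 2) ^ a := by positivity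
  rcases hab.lt_or_gt with h | h
  · linarith [key h]
  · linarith [key h]

theorem abs_zigzagCode_sub_le_of_mem_cylinder {s w : List ℕ} {K : ℕ} (hw : w ∈ cylinder s K) :
    |zigzagCode w - zigzagCode s| ≤ zigzagWeight s * (1 / 2) ^ K := by
  obtain ⟨t, rfl, ht⟩ := hw
  rw [zigzagCode_append, add_sub_cancel_left, abs_mul, abs_of_pos (zigzagWeight_pos s)]
  refine mul_le_mul_of_nonneg_left ?_ (zigzagWeight_pos s).le
  cases t with
  | nil => rw [zigzagCode_nil, abs_zero]; positivity
  | cons k t =>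
    calc |zigzagCode (k :: t)| ≤ 5 / 8 * (1 / 2) ^ k := (abs_zigzagCode_cons_mem_Icc k t).2
      _ ≤ (1 / 2) ^ k := by linarith [pow_pos (by norm_num : (0 : ℝ) < 1 / 2) k]
      _ ≤ (1 / 2) ^ K := pow_le_pow_of_le_one (by norm_num) (by norm_num) (ht k rfl)

theorem exists_zigzagCode_preimage_ball_subset_cylinder (K : ℕ) : ∀ s : List ℕ,
    ∃ δ > 0, zigzagCode ⁻¹' Metric.ball (zigzagCode s) δ ⊆ cylinder s K
  | [] => by
    refine ⟨3 / 8 * (1 / 2) ^ K, by positivity, fun w hw => ?_⟩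
    rw [mem_preimage, Metric.mem_ball, Real.dist_eq, zigzagCode_nil, sub_zero] at hw
    refine ⟨w, rfl, fun k hk => ?_⟩
    cases w with
    | nil => cases hk
    | cons k' t =>
      obtain rfl : k' = k := Option.some_injective _ hk
      by_contra! hkK
      have := (abs_zigzagCode_cons_mem_Icc k' t).1
      have : (1 / 2 : ℝ) ^ K ≤ (1 / 2) ^ k' :=
        pow_le_pow_of_le_one (by norm_num) (by norm_num) hkK.le
      linarith
  | a :: s => by
    obtain ⟨δ, hδ, hsub⟩ := exists_zigzagCode_preimage_ball_subset_cylinder K s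
    have hr : (0 : ℝ) < (1 / 2) ^ a := by positivity
    refine ⟨min ((1 / 2) ^ a / 16) ((1 / 2) ^ a / 8 * δ), by positivity, fun w hw => ?_⟩
    rw [mem_preimage, Metric.mem_ball, Real.dist_eq, lt_min_iff] at hw
    cases w with
    | nil =>
      have := (abs_zigzagCode_cons_mem_Icc a s).1
      rw [zigzagCode_nil, zero_sub, abs_neg] at hw
      linarith
    | cons b w =>
      obtain rfl : b = a := by
        by_contra hba
        have := abs_zigzagCode_cons_sub_cons (Ne.symm hba) s w
        rw [abs_sub_comm] at this
        linarith
      refine cons_mem_cylinder_cons b (hsub ?_)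
      rw [mem_preimage, Metric.mem_ball, Real.dist_eq]
      have h2 := hw.2
      rw [zigzagCode_cons, zigzagCode_cons, add_sub_add_left_eq_sub, ← mul_sub, abs_mul,
        abs_of_pos (by positivity : (0 : ℝ) < (1 / 2) ^ b / 8)] at h2
      exact lt_of_mul_lt_mul_left h2 (by positivity)

theorem zigzagCode_injective : Injective zigzagCode :=
  injective_of_forall_mem_cylinder fun s w h => by
    obtain ⟨δ, hδ, hsub⟩ := exists_zigzagCode_preimage_ball_subset_cylinder 0 s
    exact hsub (by rw [mem_preimage, h]; exact Metric.mem_ball_self hδ)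

theorem hasBasis_comap_zigzagCode_nhds (s : List ℕ) :
    (comap zigzagCode (𝓝 (zigzagCode s))).HasBasis (fun _ => True) (cylinder s) := by
  refine (Metric.nhds_basis_ball.comap zigzagCode).to_hasBasis (fun δ hδ => ?_) fun K _ =>
    exists_zigzagCode_preimage_ball_subset_cylinder K s
  obtain ⟨K, hK⟩ := exists_pow_lt_of_lt_one (div_pos hδ (zigzagWeight_pos s))
    (by norm_num : (1 / 2 : ℝ) < 1)
  rw [lt_div_iff₀ (zigzagWeight_pos s)] at hK
  refine ⟨K, trivial, fun w hw => ?_⟩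
  rw [mem_preimage, Metric.mem_ball, Real.dist_eq]
  linarith [abs_zigzagCode_sub_le_of_mem_cylinder hw]

theorem exists_zigzagCode_mem_Ioo_right (s : List ℕ) {ε : ℝ} (hε : 0 < ε) :
    ∃ w, zigzagCode w ∈ Ioo (zigzagCode s) (zigzagCode s + ε) := by
  obtain ⟨j, hj⟩ := exists_pow_lt_of_lt_one (div_pos hε (zigzagWeight_pos s))
    (by norm_num : (1 / 4 : ℝ) < 1)
  rw [lt_div_iff₀ (zigzagWeight_pos s)] at hj
  have hW := zigzagWeight_pos s
  have hstep :
      zigzagCode (s ++ [2 * j]) = zigzagCode s + zigzagWeight s * ((1 / 4) ^ j / 2) := by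
    rw [zigzagCode_append, zigzagCode_cons, zigzagCode_nil, pow_mul]; norm_num
  refine ⟨s ++ [2 * j], ?_, ?_⟩ <;> rw [hstep]
  · have : (0 : ℝ) < (1 / 4) ^ j := by positivity
    nlinarith
  · nlinarith [pow_pos (by norm_num : (0 : ℝ) < 1 / 4) j]

theorem exists_zigzagCode_mem_Ioo_left (s : List ℕ) {ε : ℝ} (hε : 0 < ε) :
    ∃ w, zigzagCode w ∈ Ioo (zigzagCode s - ε) (zigzagCode s) := by
  obtain ⟨j, hj⟩ := exists_pow_lt_of_lt_one (div_pos hε (zigzagWeight_pos s))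
    (by norm_num : (1 / 4 : ℝ) < 1)
  rw [lt_div_iff₀ (zigzagWeight_pos s)] at hj
  have hW := zigzagWeight_pos s
  have hstep : zigzagCode (s ++ [2 * j + 1]) =
      zigzagCode s - zigzagWeight s * ((1 / 4) ^ j / 4) := by
    rw [zigzagCode_append, zigzagCode_cons, zigzagCode_nil, pow_succ, pow_mul]; norm_num; ring
  refine ⟨s ++ [2 * j + 1], ?_, ?_⟩ <;> rw [hstep]
  · nlinarith [pow_pos (by norm_num : (0 : ℝ) < 1 / 4) j]
  · have : (0 : ℝ) < (1 / 4) ^ j := by positivity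
    nlinarith

theorem nonempty_homeomorph_rat_of_countable {α : Type*} [LinearOrder α] [TopologicalSpace α]
    [OrderTopology α] [NoMinOrder α] [NoMaxOrder α] {S : Set α} (hS : S.Countable)
    (hne : S.Nonempty) (hleft : ∀ x ∈ S, ∀ y < x, (S ∩ Ioo y x).Nonempty)
    (hright : ∀ x ∈ S, ∀ y > x, (S ∩ Ioo x y).Nonempty) : Nonempty (S ≃ₜ ℚ) := by
  have : Countable S := hS.to_subtype
  have : Nonempty S := hne.to_subtype
  have : DenselyOrdered S := ⟨fun x y hxy => by
    obtain ⟨z, hzS, hz⟩ := hleft y y.2 x hxy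
    exact ⟨⟨z, hzS⟩, hz⟩⟩
  have : NoMinOrder S := ⟨fun x => by
    obtain ⟨y, hy⟩ := exists_lt (x : α)
    obtain ⟨z, hzS, hz⟩ := hleft x x.2 y hy
    exact ⟨⟨z, hzS⟩, hz.2⟩⟩
  have : NoMaxOrder S := ⟨fun x => by
    obtain ⟨y, hy⟩ := exists_gt (x : α)
    obtain ⟨z, hzS, hz⟩ := hright x x.2 y hy
    exact ⟨⟨z, hzS⟩, hz.1⟩⟩
  have : OrderTopology S := induced_orderTopology' _ Iff.rfl
    (fun {x y} hyx => by
      obtain ⟨z, hzS, hz⟩ := hleft x x.2 y hyx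
      exact ⟨⟨z, hzS⟩, hz.2, hz.1.le⟩)
    (fun {x y} hxy => by
      obtain ⟨z, hzS, hz⟩ := hright x x.2 y hxy
      exact ⟨⟨z, hzS⟩, hz.1, hz.2.le⟩)
  exact ⟨(Order.iso_of_countable_dense S ℚ).some.toHomeomorph⟩

theorem nonempty_homeomorph_range_zigzagCode_rat : Nonempty (range zigzagCode ≃ₜ ℚ) := by
  refine nonempty_homeomorph_rat_of_countable (countable_range _) (range_nonempty _) ?_ ?_
  · rintro _ ⟨s, rfl⟩ y hy
    obtain ⟨w, hw⟩ := exists_zigzagCode_mem_Ioo_left s (sub_pos.2 hy)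
    exact ⟨_, mem_range_self w, by rwa [sub_sub_cancel] at hw⟩
  · rintro _ ⟨s, rfl⟩ y hy
    obtain ⟨w, hw⟩ := exists_zigzagCode_mem_Ioo_right s (sub_pos.2 hy)
    exact ⟨_, mem_range_self w, by rwa [add_sub_cancel] at hw⟩

theorem nonempty_homeomorph_range_of_comap_nhds_eq {P X Y : Type*} [TopologicalSpace X]
    [TopologicalSpace Y] {f : P → X} {g : P → Y} (hf : Injective f) (hg : Injective g)
    (h : ∀ p, comap f (𝓝 (f p)) = comap g (𝓝 (g p))) : Nonempty (range f ≃ₜ range g) := by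
  let _ : TopologicalSpace P := induced f ‹_›
  have hfe : IsEmbedding f := ⟨⟨rfl⟩, hf⟩
  have hge : IsEmbedding g := ⟨isInducing_iff_nhds.2 fun p => by rw [nhds_induced, h], hg⟩
  exact ⟨hfe.toHomeomorph.symm.trans hge.toHomeomorph⟩

theorem nonempty_homeomorph_B1_range_zigzagCode :
    Nonempty (@Homeomorph B1 (range zigzagCode) (induced (↑) (hattori A1)) _) := by
  have hnhds (s : List ℕ) : comap cantorCode (@nhds ℝ (hattori A1) (cantorCode s)) =
      comap zigzagCode (𝓝 (zigzagCode s)) := by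
    rw [nhds_hattori_of_notMem (not_not.2 (range_cantorCode ▸ mem_range_self s))]
    exact (hasBasis_comap_cantorCode_nhdsGE s).eq_of_same_basis
      (hasBasis_comap_zigzagCode_nhds s)
  exact range_cantorCode ▸ @nonempty_homeomorph_range_of_comap_nhds_eq _ _ _ (hattori A1) _ _ _
    cantorCode_injective zigzagCode_injective hnhds

/-- B₁ is nowhere dense in H(A₁), and B₁ with the subspace topology from H(A₁)
is homeomorphic to ℚ with its usual topology. -/
theorem B1_nowhereDense_and_homeomorphic_rat :
    @IsNowhereDense ℝ (hattori A1) B1 ∧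
    Nonempty (@Homeomorph ↥B1 ℚ
      (TopologicalSpace.induced ((↑) : B1 → ℝ) (hattori A1)) inferInstance) := by
  refine ⟨isNowhereDense_hattori isNowhereDense_B1 A1, ?_⟩
  obtain ⟨e⟩ := nonempty_homeomorph_B1_range_zigzagCode
  obtain ⟨e'⟩ := nonempty_homeomorph_range_zigzagCode_rat
  let _ : TopologicalSpace B1 := induced (↑) (hattori A1)
  exact ⟨e.trans e'⟩
end
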